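/- arXiv:2506.15248 — 8 statements merged into one kernel-verified Lean document; each statement's English description precedes it below -/
import Mathlib

section
/- The union of two Q*g-closed subsets of a topological space is Q*g-closed. -/
open Set Topology

def QStarClosed {X : Type*} [TopologicalSpace X] (A : Set X) : Prop :=
  IsClosed A ∧ interior A = ∅

def QStarOpen {X : Type*} [TopologicalSpace X] (A : Set X) : Prop :=
  QStarClosed Aᶜ

def GClosed {X : Type*} [TopologicalSpace X] (A : Set X) : Prop :=
  ∀ U : Set X, IsOpen U → A ⊆ U → closure A ⊆ U

def QStarGClosed {X : Type*} [TopologicalSpace X] (A : Set X) : Prop :=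
  ∀ U : Set X, QStarOpen U → A ⊆ U → closure A ⊆ U

def QStarGOpen {X : Type*} [TopologicalSpace X] (A : Set X) : Prop :=
  QStarGClosed Aᶜ

def QStarNormal (X : Type*) [TopologicalSpace X] : Prop :=
  ∀ A B : Set X, QStarClosed A → QStarClosed B → Disjoint A B →
    ∃ U V : Set X, IsOpen U ∧ IsOpen V ∧ A ⊆ U ∧ B ⊆ V ∧ Disjoint U V

def NormalSp (X : Type*) [TopologicalSpace X] : Prop :=
  ∀ A B : Set X, IsClosed A → IsClosed B → Disjoint A B →
    ∃ U V : Set X, IsOpen U ∧ IsOpen V ∧ A ⊆ U ∧ B ⊆ V ∧ Disjoint U V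

def GNormal (X : Type*) [TopologicalSpace X] : Prop :=
  ∀ A B : Set X, GClosed A → GClosed B → Disjoint A B →
    ∃ U V : Set X, IsOpen U ∧ IsOpen V ∧ A ⊆ U ∧ B ⊆ V ∧ Disjoint U V

theorem stmt7 {X : Type*} [TopologicalSpace X] (A B : Set X)
    (hA : QStarGClosed A) (hB : QStarGClosed B) : QStarGClosed (A ∪ B) := by
  intro U hU hAB
  obtain ⟨hAU, hBU⟩ := union_subset_iff.1 hAB
  rw [closure_union]
  exact union_subset (hA U hU hAU) (hB U hU hBU)
end

section
/- A topological space X is Q*-normal if and only if for every Q*-closed set A and every Q*-open set B with A ⊆ B, there exists an open set U such that A ⊆ U ⊆ cl(U) ⊆ B. -/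
open Set Topology

theorem separatedNhds_iff_exists_isOpen_disjoint_closure {X : Type*} [TopologicalSpace X]
    {s t : Set X} : SeparatedNhds s t ↔ ∃ U, IsOpen U ∧ s ⊆ U ∧ Disjoint (closure U) t := by
  constructor
  · rintro ⟨U, V, hU, hV, hsU, htV, hUV⟩
    exact ⟨U, hU, hsU, (hUV.closure_left hV).mono_right htV⟩
  · rintro ⟨U, hU, hsU, hUt⟩
    exact ⟨U, (closure U)ᶜ, hU, isClosed_closure.isOpen_compl, hsU, hUt.subset_compl_left,
      disjoint_compl_right.mono_left subset_closure⟩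

theorem stmt11 {X : Type*} [TopologicalSpace X] :
    QStarNormal X ↔
      ∀ A B : Set X, QStarClosed A → QStarOpen B → A ⊆ B →
        ∃ U : Set X, IsOpen U ∧ A ⊆ U ∧ U ⊆ closure U ∧ closure U ⊆ B := by
  refine ⟨fun h A B hA hB hAB => ?_, fun h A B hA hB hAB => ?_⟩
  · obtain ⟨U, hU, hAU, hUB⟩ := separatedNhds_iff_exists_isOpen_disjoint_closure.mp
      (h A Bᶜ hA hB (disjoint_compl_right_iff_subset.mpr hAB))
    exact ⟨U, hU, hAU, subset_closure, disjoint_compl_right_iff_subset.mp hUB⟩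
  · obtain ⟨U, hU, hAU, -, hUB⟩ :=
      h A Bᶜ hA (by rwa [QStarOpen, compl_compl]) (subset_compl_iff_disjoint_right.mpr hAB)
    exact separatedNhds_iff_exists_isOpen_disjoint_closure.mpr
      ⟨U, hU, hAU, subset_compl_iff_disjoint_right.mp hUB⟩
end

section
/- A topological space X is Q*-normal if and only if for every pair of Q*-open subsets U and V of X whose union is X, there exist closed subsets G and H of X such that G ⊆ U, H ⊆ V, and G ∪ H = X. -/
open Set Topology

theorem disjoint_compl_compl_iff_union_eq_univ {X : Type*} {U V : Set X} :
    Disjoint Uᶜ Vᶜ ↔ U ∪ V = univ := by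
  rw [disjoint_iff_inter_eq_empty, ← compl_union, compl_empty_iff]

theorem exists_isOpen_separation_compl_iff {X : Type*} [TopologicalSpace X] (U V : Set X) :
    (∃ U' V' : Set X, IsOpen U' ∧ IsOpen V' ∧ Uᶜ ⊆ U' ∧ Vᶜ ⊆ V' ∧ Disjoint U' V') ↔
      ∃ G H : Set X, IsClosed G ∧ IsClosed H ∧ G ⊆ U ∧ H ⊆ V ∧ G ∪ H = univ := by
  constructor
  · rintro ⟨U', V', hU', hV', hUU', hVV', hdisj⟩
    refine ⟨U'ᶜ, V'ᶜ, hU'.isClosed_compl, hV'.isClosed_compl,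
      compl_subset_comm.mp hUU', compl_subset_comm.mp hVV', ?_⟩
    rw [← compl_inter, hdisj.inter_eq, compl_empty]
  · rintro ⟨G, H, hG, hH, hGU, hHV, hcover⟩
    refine ⟨Gᶜ, Hᶜ, hG.isOpen_compl, hH.isOpen_compl,
      compl_subset_compl.mpr hGU, compl_subset_compl.mpr hHV, ?_⟩
    rw [disjoint_iff_inter_eq_empty, ← compl_union, hcover, compl_univ]

theorem stmt12 {X : Type*} [TopologicalSpace X] :
    QStarNormal X ↔
      ∀ U V : Set X, QStarOpen U → QStarOpen V → U ∪ V = Set.univ →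
        ∃ G H : Set X, IsClosed G ∧ IsClosed H ∧ G ⊆ U ∧ H ⊆ V ∧ G ∪ H = Set.univ := by
  simp_rw [← exists_isOpen_separation_compl_iff, ← disjoint_compl_compl_iff_union_eq_univ]
  constructor
  · exact fun h U V hU hV ↦ h Uᶜ Vᶜ hU hV
  · intro h A B hA hB hAB
    rw [← compl_compl A, ← compl_compl B] at hAB ⊢
    exact h Aᶜ Bᶜ (by rwa [QStarOpen, compl_compl]) (by rwa [QStarOpen, compl_compl]) hAB
end

section
/- A topological space X is Q*-normal if and only if for every pair of disjoint Q*-closed subsets A and B of X there exist open subsets U and V such that A ⊆ U, B ⊆ V, and cl(U) ∩ cl(V) = ∅. -/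
open Set Topology

theorem qStarClosed_frontier {X : Type*} [TopologicalSpace X] {V : Set X} (hV : IsOpen V) :
    QStarClosed (frontier V) :=
  ⟨isClosed_frontier, by rw [← frontier_compl]; exact interior_frontier hV.isClosed_compl⟩

/-- Points of `closure V` that are adherent to the complement of `closure V` lie in
`frontier (closure V) ⊆ frontier V`. -/
theorem closure_diff_closure_inter_closure_subset {X : Type*} [TopologicalSpace X]
    (G V : Set X) : closure (G \ closure V) ∩ closure V ⊆ closure G ∩ frontier V := by
  rintro x ⟨hxG, hxV⟩
  have hx_compl : x ∈ closure (closure V)ᶜ := closure_mono (sdiff_subset_compl _ _) hxG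
  rw [closure_compl] at hx_compl
  exact ⟨closure_mono sdiff_subset hxG,
    frontier_closure_subset ⟨by rwa [closure_closure], hx_compl⟩⟩

theorem stmt13 {X : Type*} [TopologicalSpace X] :
    QStarNormal X ↔
      ∀ A B : Set X, QStarClosed A → QStarClosed B → Disjoint A B →
        ∃ U V : Set X, IsOpen U ∧ IsOpen V ∧ A ⊆ U ∧ B ⊆ V ∧
          closure U ∩ closure V = ∅ := by
  constructor
  · intro h A B hA hB hAB
    obtain ⟨U, V, hU, hV, hAU, hBV, hUV⟩ := h A B hA hB hAB
    have hA_clV : Disjoint A (closure V) := (hUV.closure_right hU).mono_left hAU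
    -- shrink `U` away from `closure V` by separating `A` from the nowhere dense set `frontier V`
    obtain ⟨G, H, hG, hH, hAG, hFH, hGH⟩ := h A (frontier V) hA (qStarClosed_frontier hV)
      (hA_clV.mono_right frontier_subset_closure)
    have hG_F : Disjoint (closure G) (frontier V) := (hGH.closure_left hH).mono_right hFH
    refine ⟨G \ closure V, V, hG.sdiff isClosed_closure, hV, subset_sdiff.2 ⟨hAG, hA_clV⟩,
      hBV, subset_empty_iff.1 ?_⟩
    exact (closure_diff_closure_inter_closure_subset G V).trans hG_F.inter_eq.subset
  · intro h A B hA hB hAB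
    obtain ⟨U, V, hU, hV, hAU, hBV, hUV⟩ := h A B hA hB hAB
    exact ⟨U, V, hU, hV, hAU, hBV,
      (disjoint_iff_inter_eq_empty.2 hUV).mono subset_closure subset_closure⟩
end

section
/- A topological space X is Q*-normal if and only if for any two disjoint Q*-closed sets H and K there exist disjoint Q*g-open sets U and V with H ⊆ U and K ⊆ V. -/
open Set Topology

section

variable {X : Type*} [TopologicalSpace X]

theorem QStarClosed.qStarOpen_compl {H : Set X} (hH : QStarClosed H) : QStarOpen Hᶜ := by
  rwa [QStarOpen, compl_compl]

theorem IsOpen.qStarGOpen {U : Set X} (hU : IsOpen U) : QStarGOpen U := by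
  intro W _ hUW
  rwa [hU.isClosed_compl.closure_eq]

theorem QStarGOpen.subset_interior {U H : Set X} (hU : QStarGOpen U) (hH : QStarClosed H)
    (hHU : H ⊆ U) : H ⊆ interior U := by
  have hclosure : closure Uᶜ ⊆ Hᶜ := hU Hᶜ hH.qStarOpen_compl (compl_subset_compl.mpr hHU)
  rwa [closure_compl, compl_subset_compl] at hclosure

end

theorem stmt14 {X : Type*} [TopologicalSpace X] :
    QStarNormal X ↔
      ∀ H K : Set X, QStarClosed H → QStarClosed K → Disjoint H K →
        ∃ U V : Set X, QStarGOpen U ∧ QStarGOpen V ∧ H ⊆ U ∧ K ⊆ V ∧ Disjoint U V := by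
  constructor
  · intro hX H K hH hK hHK
    obtain ⟨U, V, hU, hV, hHU, hKV, hUV⟩ := hX H K hH hK hHK
    exact ⟨U, V, hU.qStarGOpen, hV.qStarGOpen, hHU, hKV, hUV⟩
  · intro hX H K hH hK hHK
    obtain ⟨U, V, hU, hV, hHU, hKV, hUV⟩ := hX H K hH hK hHK
    exact ⟨interior U, interior V, isOpen_interior, isOpen_interior,
      hU.subset_interior hH hHU, hV.subset_interior hK hKV,
      hUV.mono interior_subset interior_subset⟩
end

section
/- If f : X → Y is an open continuous function, then the preimage under f of any Q*-closed subset of Y is Q*-closed in X. -/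
open Set Topology

theorem stmt17 {X Y : Type*} [TopologicalSpace X] [TopologicalSpace Y]
    (f : X → Y) (hopen : ∀ U : Set X, IsOpen U → IsOpen (f '' U))
    (hcont : Continuous f) (A : Set Y) (hA : QStarClosed A) :
    QStarClosed (f ⁻¹' A) := by
  refine ⟨hA.1.preimage hcont, ?_⟩
  have h1 : f '' interior (f ⁻¹' A) ⊆ interior A :=
    interior_maximal ((image_mono (f := f) interior_subset).trans
      (image_preimage_subset f A)) (hopen _ isOpen_interior)
  rw [hA.2, subset_empty_iff, image_eq_empty] at h1
  exact h1
end

section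
/- A surjective function f : X → Y is almost Q*g-closed if and only if for each subset S of Y and each regular open set U of X containing f⁻¹(S), there exists a Q*g-open set V of Y such that S ⊆ V and f⁻¹(V) ⊆ U. -/
open Set Topology

/- For regular open `U = Fᶜ`, the kernel image `kernImage f U = (f '' F)ᶜ` is the largest set
whose preimage lies in `U`, so it is the required `V` when `f '' F` is Q*g-closed. Conversely, for
Q*-open `G ⊇ f '' F`, the property applied to `S = Gᶜ` gives a Q*g-closed `Vᶜ` with
`f '' F ⊆ Vᶜ ⊆ G`, whence `closure (f '' F) ⊆ closure Vᶜ ⊆ G`. -/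

theorem compl_eq_interior_closure_compl_iff {X : Type*} [TopologicalSpace X] {F : Set X} :
    Fᶜ = interior (closure Fᶜ) ↔ F = closure (interior F) := by
  rw [closure_compl, interior_compl, compl_inj_iff]

theorem qStarGOpen_kernImage_iff {X Y : Type*} [TopologicalSpace Y] {f : X → Y} {U : Set X} :
    QStarGOpen (kernImage f U) ↔ QStarGClosed (f '' Uᶜ) := by
  rw [QStarGOpen, kernImage_eq_compl, compl_compl]

theorem QStarGClosed.of_forall_exists_between {X : Type*} [TopologicalSpace X] {A : Set X}
    (h : ∀ G : Set X, QStarOpen G → A ⊆ G → ∃ C : Set X, QStarGClosed C ∧ A ⊆ C ∧ C ⊆ G) :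
    QStarGClosed A := by
  intro G hG hAG
  obtain ⟨C, hC, hAC, hCG⟩ := h G hG hAG
  exact (closure_mono hAC).trans (hC G hG hCG)

theorem stmt18_general {X Y : Type*} [TopologicalSpace X] [TopologicalSpace Y]
    (f : X → Y) :
    (∀ F : Set X, F = closure (interior F) → QStarGClosed (f '' F)) ↔
      ∀ (S : Set Y) (U : Set X), U = interior (closure U) → f ⁻¹' S ⊆ U →
        ∃ V : Set Y, QStarGOpen V ∧ S ⊆ V ∧ f ⁻¹' V ⊆ U := by
  constructor
  · intro h S U hU hSU
    refine ⟨kernImage f U, ?_, subset_kernImage_iff.mpr hSU, subset_kernImage_iff.mp le_rfl⟩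
    rw [← compl_compl U] at hU
    exact qStarGOpen_kernImage_iff.mpr (h _ (compl_eq_interior_closure_compl_iff.mp hU))
  · intro h F hF
    refine QStarGClosed.of_forall_exists_between fun G _ hFG => ?_
    obtain ⟨V, hV, hGV, hVF⟩ := h Gᶜ Fᶜ (compl_eq_interior_closure_compl_iff.mpr hF)
      (compl_subset_compl.mpr (image_subset_iff.mp hFG))
    exact ⟨Vᶜ, hV, image_subset_iff.mpr (subset_compl_comm.mp hVF), compl_subset_comm.mp hGV⟩

theorem stmt18 {X Y : Type*} [TopologicalSpace X] [TopologicalSpace Y]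
    (f : X → Y) (hf : Function.Surjective f) :
    (∀ F : Set X, F = closure (interior F) → QStarGClosed (f '' F)) ↔
      ∀ (S : Set Y) (U : Set X), U = interior (closure U) → f ⁻¹' S ⊆ U →
        ∃ V : Set Y, QStarGOpen V ∧ S ⊆ V ∧ f ⁻¹' V ⊆ U :=
  stmt18_general f
end

section
/- If f : X → Y is an almost Q*g-closed, Q*-irresolute surjection and X is Q*-normal, then Y is Q*-normal. -/
open Set Topology

/-
Separate the Q*-closed preimages of disjoint Q*-closed sets `A`, `B ⊆ Y` by disjoint open sets
`U`, `V ⊆ X`. The regular closed sets `K = cl (cl U)ᶜ` and `K' = cl U` cover `X`, and miss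
`f⁻¹ A` and `f⁻¹ B` respectively. Since `f '' K` is Q*g-closed and lies in the Q*-open set `Aᶜ`,
so does its closure; likewise for `K'` and `B`. The complements of these two closures are open,
contain `A` and `B`, and are disjoint because `f '' K ∪ f '' K' = Y` by surjectivity.
-/

theorem qStarOpen_compl_iff {X : Type*} [TopologicalSpace X] {A : Set X} :
    QStarOpen Aᶜ ↔ QStarClosed A := by
  rw [QStarOpen, compl_compl]

theorem QStarClosed.preimage {X Y : Type*} [TopologicalSpace X] [TopologicalSpace Y]
    {f : X → Y} (hf : ∀ V : Set Y, QStarOpen V → QStarOpen (f ⁻¹' V)) {A : Set Y}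
    (hA : QStarClosed A) : QStarClosed (f ⁻¹' A) := by
  simpa only [← qStarOpen_compl_iff, preimage_compl] using hf Aᶜ (qStarOpen_compl_iff.2 hA)

theorem QStarGClosed.disjoint_closure {X : Type*} [TopologicalSpace X] {S A : Set X}
    (hS : QStarGClosed S) (hA : QStarClosed A) (hSA : Disjoint S A) :
    Disjoint (closure S) A :=
  subset_compl_iff_disjoint_right.1 <|
    hS Aᶜ (qStarOpen_compl_iff.2 hA) (subset_compl_iff_disjoint_right.2 hSA)

theorem IsOpen.closure_eq_closure_interior_closure {X : Type*} [TopologicalSpace X] {U : Set X}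
    (hU : IsOpen U) : closure U = closure (interior (closure U)) := by
  simpa only [hU.interior_eq] using closure_interior_idem (s := U) |>.symm

theorem disjoint_compl_closure_image_of_union_eq_univ {X Y : Type*} [TopologicalSpace Y]
    {f : X → Y} (hf : Function.Surjective f) {K K' : Set X} (hKK' : K ∪ K' = univ) :
    Disjoint (closure (f '' K))ᶜ (closure (f '' K'))ᶜ := by
  rw [disjoint_compl_left_iff_subset, compl_subset_iff_union]
  refine eq_univ_of_subset (union_subset_union subset_closure subset_closure) ?_
  rw [← image_union, union_comm, hKK', image_univ_of_surjective hf]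

theorem stmt19 {X Y : Type*} [TopologicalSpace X] [TopologicalSpace Y]
    (f : X → Y) (hf : Function.Surjective f)
    (hclosed : ∀ F : Set X, F = closure (interior F) → QStarGClosed (f '' F))
    (hirr : ∀ V : Set Y, QStarOpen V → QStarOpen (f ⁻¹' V))
    (hX : QStarNormal X) : QStarNormal Y := by
  intro A B hA hB hAB
  obtain ⟨U, V, hU, hV, hAU, hBV, hUV⟩ :=
    hX _ _ (hA.preimage hirr) (hB.preimage hirr) (hAB.preimage f)
  have hcover : closure (closure U)ᶜ ∪ closure U = univ :=
    eq_univ_of_subset (union_subset_union_left _ subset_closure) (compl_union_self _)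
  have hKA : Disjoint (closure (f '' closure (closure U)ᶜ)) A := by
    have hK : QStarGClosed (f '' closure (closure U)ᶜ) :=
      hclosed _ isClosed_closure.isOpen_compl.closure_eq_closure_interior_closure
    refine hK.disjoint_closure hA ?_
    rw [disjoint_image_left, closure_compl]
    exact disjoint_compl_left.mono_right (hAU.trans hU.subset_interior_closure)
  have hUB : Disjoint (closure (f '' closure U)) B := by
    refine (hclosed _ hU.closure_eq_closure_interior_closure).disjoint_closure hB ?_
    rw [disjoint_image_left]
    exact (hUV.closure_left hV).mono_right hBV
  exact ⟨_, _, isClosed_closure.isOpen_compl, isClosed_closure.isOpen_compl,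
    hKA.subset_compl_left, hUB.subset_compl_left,
    disjoint_compl_closure_image_of_union_eq_univ hf hcover⟩
end
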